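/- Every formula provable in CL5⁻ is an atomic-level instance of a normal binary tautology. -/

import Mathlib

namespace CirquentCalc

/-- Formulas: literals (negation applied only to atoms), ∧, ∨. -/
inductive Fml where
  | pos : ℕ → Fml
  | neg : ℕ → Fml
  | and : Fml → Fml → Fml
  | or : Fml → Fml → Fml
deriving DecidableEq

namespace Fml

/-- Negation (pushed to atoms, as ¬ applies only to atoms). -/
def negate : Fml → Fml
  | pos n => neg n
  | neg n => pos n
  | and a b => or a.negate b.negate
  | or a b => and a.negate b.negate

/-- Substitution extended homomorphically. -/
def subst (σ : ℕ → Fml) : Fml → Fml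
  | pos n => σ n
  | neg n => (σ n).negate
  | and a b => and (a.subst σ) (b.subst σ)
  | or a b => or (a.subst σ) (b.subst σ)

/-- Classical evaluation under a truth assignment. -/
def eval (v : ℕ → Bool) : Fml → Bool
  | pos n => v n
  | neg n => !(v n)
  | and a b => a.eval v && b.eval v
  | or a b => a.eval v || b.eval v

/-- Number of positive occurrences of atom `a`. -/
def cPos (a : ℕ) : Fml → ℕ
  | pos n => if n = a then 1 else 0
  | neg _ => 0
  | and f g => f.cPos a + g.cPos a
  | or f g => f.cPos a + g.cPos a

/-- Number of negative occurrences of atom `a`. -/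
def cNeg (a : ℕ) : Fml → ℕ
  | pos _ => 0
  | neg n => if n = a then 1 else 0
  | and f g => f.cNeg a + g.cNeg a
  | or f g => f.cNeg a + g.cNeg a

/-- Total number of positive occurrences of atoms. -/
def posOcc : Fml → ℕ
  | pos _ => 1
  | neg _ => 0
  | and f g => f.posOcc + g.posOcc
  | or f g => f.posOcc + g.posOcc

/-- Length: total number of occurrences of literals and connectives. -/
def len : Fml → ℕ
  | pos _ => 1
  | neg _ => 1
  | and f g => f.len + g.len + 1
  | or f g => f.len + g.len + 1

/-- Number of occurrences of ∧. -/
def nAnd : Fml → ℕ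
  | pos _ => 0
  | neg _ => 0
  | and f g => f.nAnd + g.nAnd + 1
  | or f g => f.nAnd + g.nAnd

/-- Number of occurrences of ∨. -/
def nOr : Fml → ℕ
  | pos _ => 0
  | neg _ => 0
  | and f g => f.nOr + g.nOr
  | or f g => f.nOr + g.nOr + 1

end Fml

def Tautology (A : Fml) : Prop := ∀ v, A.eval v = true

/-- No atom has more than two occurrences. -/
def Binary (A : Fml) : Prop := ∀ a, A.cPos a + A.cNeg a ≤ 2

/-- Whenever an atom occurs twice, one occurrence is positive and one negative. -/
def Normal (A : Fml) : Prop := ∀ a, A.cPos a ≤ 1 ∧ A.cNeg a ≤ 1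

def AtomicLevel (σ : ℕ → Fml) : Prop := ∀ n, ∃ m, σ n = Fml.pos m

/-- `F` is an instance of `B`: σ(B) = F for some substitution σ. -/
def InstanceOf (F B : Fml) : Prop := ∃ σ, B.subst σ = F

/-- `F` is an atomic-level instance of `B`. -/
def AtomicInstanceOf (F B : Fml) : Prop := ∃ σ, AtomicLevel σ ∧ B.subst σ = F

/-- A cirquent: a pool of (occurrences of) formulas, and a list of ogroups,
each an (index-)set of oformulas of the pool. -/
structure Cirquent where
  pool : List Fml
  groups : List (Finset ℕ)

def emptyCirquent : Cirquent := ⟨[], []⟩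

def idCirquent (F : Fml) : Cirquent := ⟨[F.negate, F], [{0, 1}]⟩

/-- The cirquent with pool ⟨F⟩ and one ogroup containing F. -/
def fmlCirquent (F : Fml) : Cirquent := ⟨[F], [{0}]⟩

/-- Index renaming swapping `i` and `i+1`. -/
def swapIdx (i : ℕ) : ℕ → ℕ := fun j => if j = i then i + 1 else if j = i + 1 then i else j

/-- Index renaming when a new oformula is inserted at position `i`. -/
def insShift (i : ℕ) : ℕ → ℕ := fun j => if j < i then j else j + 1

/-- Index renaming when the oformulas at positions `i`, `i+1` are merged into one at `i`. -/
def mergeIdx (i : ℕ) : ℕ → ℕ := fun j => if j ≤ i then j else j - 1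

/-- Mix: placing the two premise cirquents side by side. -/
def MixStep (A B C : Cirquent) : Prop :=
  C.pool = A.pool ++ B.pool ∧
  C.groups = A.groups ++ B.groups.map (Finset.image (· + A.pool.length))

/-- Oformula exchange: swap two adjacent oformulas, preserving containment. -/
def OfExchStep (P C : Cirquent) : Prop :=
  ∃ (l₁ l₂ : List Fml) (F G : Fml),
    P.pool = l₁ ++ F :: G :: l₂ ∧ C.pool = l₁ ++ G :: F :: l₂ ∧
    C.groups = P.groups.map (Finset.image (swapIdx l₁.length))

/-- Ogroup exchange: swap two adjacent ogroups. -/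
def OgExchStep (P C : Cirquent) : Prop :=
  C.pool = P.pool ∧
  ∃ (g₁ g₂ : List (Finset ℕ)) (Γ Δ : Finset ℕ),
    P.groups = g₁ ++ Γ :: Δ :: g₂ ∧ C.groups = g₁ ++ Δ :: Γ :: g₂

/-- Pool weakening: insert a new oformula, contained in no ogroup. -/
def PoolWeakStep (P C : Cirquent) : Prop :=
  ∃ (l₁ l₂ : List Fml) (F : Fml),
    P.pool = l₁ ++ l₂ ∧ C.pool = l₁ ++ F :: l₂ ∧
    C.groups = P.groups.map (Finset.image (insShift l₁.length))

/-- Ogroup weakening: add a new arc between a pre-existing ogroup and oformula. -/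
def OgWeakStep (P C : Cirquent) : Prop :=
  C.pool = P.pool ∧
  ∃ (g₁ g₂ : List (Finset ℕ)) (Γ : Finset ℕ) (j : ℕ),
    j < P.pool.length ∧ j ∉ Γ ∧
    P.groups = g₁ ++ Γ :: g₂ ∧ C.groups = g₁ ++ insert j Γ :: g₂

/-- Downward duplication: replace an ogroup by two adjacent copies of it. -/
def DupDownStep (P C : Cirquent) : Prop :=
  C.pool = P.pool ∧
  ∃ (g₁ g₂ : List (Finset ℕ)) (Γ : Finset ℕ),
    P.groups = g₁ ++ Γ :: g₂ ∧ C.groups = g₁ ++ Γ :: Γ :: g₂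

/-- Upward duplication: the converse of downward duplication. -/
def DupUpStep (P C : Cirquent) : Prop :=
  C.pool = P.pool ∧
  ∃ (g₁ g₂ : List (Finset ℕ)) (Γ : Finset ℕ),
    P.groups = g₁ ++ Γ :: Γ :: g₂ ∧ C.groups = g₁ ++ Γ :: g₂

/-- ∨-introduction: merge two adjacent oformulas F, G into F ∨ G. -/
def OrIntroStep (P C : Cirquent) : Prop :=
  ∃ (l₁ l₂ : List Fml) (F G : Fml),
    P.pool = l₁ ++ F :: G :: l₂ ∧ C.pool = l₁ ++ (Fml.or F G) :: l₂ ∧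
    C.groups = P.groups.map (Finset.image (mergeIdx l₁.length))

/-- The merging of the ogroup list in ∧-introduction: no ogroup contains both `i`
and `i+1`; every ogroup containing `i` is immediately followed by one containing
`i+1` and vice versa; such pairs are merged. -/
inductive AndMerge (i : ℕ) : List (Finset ℕ) → List (Finset ℕ) → Prop where
  | nil : AndMerge i [] []
  | skip {Γ : Finset ℕ} {l l' : List (Finset ℕ)} :
      i ∉ Γ → (i + 1) ∉ Γ → AndMerge i l l' → AndMerge i (Γ :: l) (Γ :: l')
  | merge {Γ Δ : Finset ℕ} {l l' : List (Finset ℕ)} :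
      i ∈ Γ → (i + 1) ∉ Γ → (i + 1) ∈ Δ → i ∉ Δ →
      AndMerge i l l' → AndMerge i (Γ :: Δ :: l) ((Γ ∪ Δ) :: l')

/-- ∧-introduction. -/
def AndIntroStep (P C : Cirquent) : Prop :=
  ∃ (l₁ l₂ : List Fml) (F G : Fml) (merged : List (Finset ℕ)),
    P.pool = l₁ ++ F :: G :: l₂ ∧ C.pool = l₁ ++ (Fml.and F G) :: l₂ ∧
    AndMerge l₁.length P.groups merged ∧
    C.groups = merged.map (Finset.image (mergeIdx l₁.length))

inductive RuleName where
  | emptyAx | idAx | mix | ofExch | ogExch | poolWeak | ogWeak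
  | dupDown | dupUp | orIntro | andIntro
deriving DecidableEq

/-- The unary (one-premise) rules, by name. -/
def unRel : RuleName → Cirquent → Cirquent → Prop
  | .ofExch => OfExchStep
  | .ogExch => OgExchStep
  | .poolWeak => PoolWeakStep
  | .ogWeak => OgWeakStep
  | .dupDown => DupDownStep
  | .dupUp => DupUpStep
  | .orIntro => OrIntroStep
  | .andIntro => AndIntroStep
  | _ => fun _ _ => False

/-- Proof trees: each node is labeled by its cirquent and the rule used. -/
inductive PTree where
  | leaf (C : Cirquent) (r : RuleName)
  | un (C : Cirquent) (r : RuleName) (p : PTree)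
  | bin (C : Cirquent) (r : RuleName) (p q : PTree)

namespace PTree

def concl : PTree → Cirquent
  | leaf C _ => C
  | un C _ _ => C
  | bin C _ _ _ => C

/-- Validity: each node follows from its children by the named rule. -/
def Valid : PTree → Prop
  | leaf C r =>
      (r = .emptyAx ∧ C = emptyCirquent) ∨ (r = .idAx ∧ ∃ F, C = idCirquent F)
  | un C r p => p.Valid ∧ unRel r p.concl C
  | bin C r p q => p.Valid ∧ q.Valid ∧ r = .mix ∧ MixStep p.concl q.concl C

/-- Number of applications of rule `r` in the proof. -/
def count (r : RuleName) : PTree → ℕ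
  | leaf _ r' => if r' = r then 1 else 0
  | un _ r' p => (if r' = r then 1 else 0) + p.count r
  | bin _ r' p q => (if r' = r then 1 else 0) + p.count r + q.count r

/-- The cirquents occurring in the proof. -/
def cirquents : PTree → List Cirquent
  | leaf C _ => [C]
  | un C _ p => C :: p.cirquents
  | bin C _ p q => C :: (p.cirquents ++ q.cirquents)

/-- Total number of rule applications (nodes). -/
def nodes : PTree → ℕ
  | leaf _ _ => 1
  | un _ _ p => p.nodes + 1
  | bin _ _ p q => p.nodes + q.nodes + 1

/-- Number of leaves of the proof tree. -/
def leavesCount : PTree → ℕ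
  | leaf _ _ => 1
  | un _ _ p => p.leavesCount
  | bin _ _ p q => p.leavesCount + q.leavesCount

end PTree

/-- A proof uses no duplication. -/
def DupFree (p : PTree) : Prop :=
  p.count RuleName.dupDown = 0 ∧ p.count RuleName.dupUp = 0

/-- Provability of a cirquent in CL5. -/
def ProvesC (C : Cirquent) : Prop := ∃ p : PTree, p.Valid ∧ p.concl = C

/-- Provability of a formula in CL5. -/
def ProvesCL5 (F : Fml) : Prop := ∃ p : PTree, p.Valid ∧ p.concl = fmlCirquent F

/-- Provability of a formula in CL5⁻ (CL5 without duplication). -/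
def ProvesCL5m (F : Fml) : Prop :=
  ∃ p : PTree, p.Valid ∧ DupFree p ∧ p.concl = fmlCirquent F

/-- Number of arcs of a cirquent (sum of the sizes of its ogroups). -/
def Cirquent.arcs (C : Cirquent) : ℕ := (C.groups.map Finset.card).sum

/-- Size of a cirquent: sum of the lengths of the oformulas in its pool plus
the sum of the sizes of its ogroups. -/
def Cirquent.size (C : Cirquent) : ℕ := (C.pool.map Fml.len).sum + C.arcs

/-- Size of a proof: the sum of the sizes of the cirquents it contains. -/
def PTree.size (p : PTree) : ℕ := (p.cirquents.map Cirquent.size).sum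

/-- Total number of positive occurrences of atoms in the pool. -/
def Cirquent.poolPosOcc (C : Cirquent) : ℕ := (C.pool.map Fml.posOcc).sum

end CirquentCalc

/-! Every cirquent provable in CL5 arises, by renaming atoms, from a cirquent that is true under
every assignment and whose pool is normal: no atom has two positive or two negative
occurrences in it. Identity axioms and pool weakening bring in fresh, pairwise distinct atoms
(two parts are kept apart by sending the atoms of one to even and of the other to odd
numbers), mix juxtaposes pools with disjoint atoms, and every other rule only rearranges,
merges or regroups oformulas already present, so it creates no new atom occurrence; soundness
of each rule keeps the cirquent true. For the cirquent ⟨F⟩ the generalized pool is a single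
normal, hence binary, tautology of which F is an atomic-level instance. -/

namespace CirquentCalc

namespace Fml

def ren (τ : ℕ → ℕ) : Fml → Fml
  | pos n => pos (τ n)
  | neg n => neg (τ n)
  | and f g => and (f.ren τ) (g.ren τ)
  | or f g => or (f.ren τ) (g.ren τ)

theorem subst_pos_eq_ren (τ : ℕ → ℕ) (F : Fml) : F.subst (fun n => pos (τ n)) = F.ren τ := by
  induction F <;> simp [subst, ren, negate, *]

theorem ren_negate (τ : ℕ → ℕ) (F : Fml) : F.negate.ren τ = (F.ren τ).negate := by
  induction F <;> simp [negate, ren, *]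

theorem ren_ren (τ ρ : ℕ → ℕ) (F : Fml) : (F.ren ρ).ren τ = F.ren (fun n => τ (ρ n)) := by
  induction F <;> simp [ren, *]

theorem ren_comp_ren (τ ρ : ℕ → ℕ) : ren τ ∘ ren ρ = ren (fun n => τ (ρ n)) :=
  funext (ren_ren τ ρ)

theorem eval_negate (v : ℕ → Bool) (F : Fml) : F.negate.eval v = !F.eval v := by
  induction F <;> simp [negate, eval, *]

theorem eval_ren (v : ℕ → Bool) (τ : ℕ → ℕ) (F : Fml) :
    (F.ren τ).eval v = F.eval (fun n => v (τ n)) := by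
  induction F <;> simp [ren, eval, *]

theorem cPos_negate (a : ℕ) (F : Fml) : F.negate.cPos a = F.cNeg a := by
  induction F <;> simp [negate, cPos, cNeg, *]

theorem cNeg_negate (a : ℕ) (F : Fml) : F.negate.cNeg a = F.cPos a := by
  induction F <;> simp [negate, cPos, cNeg, *]

theorem cPos_ren_two_mul (F : Fml) (b : ℕ) :
    (F.ren (2 * ·)).cPos b = if b % 2 = 0 then F.cPos (b / 2) else 0 := by
  induction F <;> simp only [ren, cPos, *] <;> split_ifs <;> omega

theorem cNeg_ren_two_mul (F : Fml) (b : ℕ) :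
    (F.ren (2 * ·)).cNeg b = if b % 2 = 0 then F.cNeg (b / 2) else 0 := by
  induction F <;> simp only [ren, cNeg, *] <;> split_ifs <;> omega

theorem cPos_ren_two_mul_add_one (F : Fml) (b : ℕ) :
    (F.ren (2 * · + 1)).cPos b = if b % 2 = 1 then F.cPos (b / 2) else 0 := by
  induction F <;> simp only [ren, cPos, *] <;> split_ifs <;> omega

theorem cNeg_ren_two_mul_add_one (F : Fml) (b : ℕ) :
    (F.ren (2 * · + 1)).cNeg b = if b % 2 = 1 then F.cNeg (b / 2) else 0 := by
  induction F <;> simp only [ren, cNeg, *] <;> split_ifs <;> omega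

end Fml

def interleave (τ₁ τ₂ : ℕ → ℕ) (n : ℕ) : ℕ := if n % 2 = 0 then τ₁ (n / 2) else τ₂ (n / 2)

@[simp] theorem interleave_two_mul (τ₁ τ₂ : ℕ → ℕ) (n : ℕ) : interleave τ₁ τ₂ (2 * n) = τ₁ n := by
  simp [interleave]

@[simp] theorem interleave_two_mul_add_one (τ₁ τ₂ : ℕ → ℕ) (n : ℕ) :
    interleave τ₁ τ₂ (2 * n + 1) = τ₂ n := by
  simp [interleave, Nat.add_mod, Nat.add_div]

def Fml.Linear (L : Fml) : Prop := ∀ a, L.cPos a + L.cNeg a ≤ 1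

theorem Fml.Linear.and_even_odd {X Y : Fml} (hX : X.Linear) (hY : Y.Linear) :
    (Fml.and (X.ren (2 * ·)) (Y.ren (2 * · + 1))).Linear := fun b => by
  simp only [Fml.cPos, Fml.cNeg, Fml.cPos_ren_two_mul, Fml.cNeg_ren_two_mul,
    Fml.cPos_ren_two_mul_add_one, Fml.cNeg_ren_two_mul_add_one]
  have := hX (b / 2)
  have := hY (b / 2)
  split_ifs <;> omega

theorem Fml.exists_linear_ren_eq (F : Fml) : ∃ (L : Fml) (τ : ℕ → ℕ), L.Linear ∧ L.ren τ = F := by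
  induction F with
  | pos n => exact ⟨.pos 0, fun _ => n, fun a => by simp [cPos, cNeg]; split <;> simp, rfl⟩
  | neg n => exact ⟨.neg 0, fun _ => n, fun a => by simp [cPos, cNeg]; split <;> simp, rfl⟩
  | and X Y ihX ihY =>
    obtain ⟨LX, τX, hLX, rfl⟩ := ihX
    obtain ⟨LY, τY, hLY, rfl⟩ := ihY
    refine ⟨.and (LX.ren (2 * ·)) (LY.ren (2 * · + 1)), interleave τX τY,
      hLX.and_even_odd hLY, ?_⟩
    simp [ren, ren_ren]
  | or X Y ihX ihY =>
    obtain ⟨LX, τX, hLX, rfl⟩ := ihX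
    obtain ⟨LY, τY, hLY, rfl⟩ := ihY
    refine ⟨.or (LX.ren (2 * ·)) (LY.ren (2 * · + 1)), interleave τX τY,
      hLX.and_even_odd hLY, ?_⟩
    simp [ren, ren_ren]

def PoolNormal (P : List Fml) : Prop :=
  ∀ a, (P.map (Fml.cPos a)).sum ≤ 1 ∧ (P.map (Fml.cNeg a)).sum ≤ 1

theorem PoolNormal.perm {P Q : List Fml} (hPQ : P.Perm Q) (hP : PoolNormal P) :
    PoolNormal Q := fun a => by
  rw [← (hPQ.map _).sum_eq, ← (hPQ.map _).sum_eq]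
  exact hP a

theorem PoolNormal.append_even_odd {P Q : List Fml} (hP : PoolNormal P) (hQ : PoolNormal Q) :
    PoolNormal (P.map (Fml.ren (2 * ·)) ++ Q.map (Fml.ren (2 * · + 1))) := fun b => by
  simp only [List.map_append, List.map_map, List.sum_append, Function.comp_def,
    Fml.cPos_ren_two_mul, Fml.cNeg_ren_two_mul, Fml.cPos_ren_two_mul_add_one,
    Fml.cNeg_ren_two_mul_add_one]
  have := hP (b / 2)
  have := hQ (b / 2)
  split_ifs <;> simp_all

theorem Fml.Linear.poolNormal_singleton {L : Fml} (hL : L.Linear) : PoolNormal [L] := fun a => by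
  have := hL a
  simp only [List.map_cons, List.map_nil, List.sum_cons, List.sum_nil]
  omega

theorem Fml.Linear.poolNormal_negate {L : Fml} (hL : L.Linear) : PoolNormal [L.negate, L] :=
  fun a => by
  have := hL a
  simp only [List.map_cons, List.map_nil, List.sum_cons, List.sum_nil, Fml.cPos_negate,
    Fml.cNeg_negate]
  omega

theorem PoolNormal.normal {B : Fml} (h : PoolNormal [B]) : Normal B := fun a => by
  simpa using h a

theorem Normal.binary {B : Fml} (h : Normal B) : Binary B := fun a => by
  have := h a
  omega

def GTrue (v : ℕ → Bool) (P : List Fml) (g : Finset ℕ) : Prop :=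
  ∃ i ∈ g, ∃ A, P[i]? = some A ∧ A.eval v = true

def CTrue (v : ℕ → Bool) (C : Cirquent) : Prop := ∀ g ∈ C.groups, GTrue v C.pool g

def CTaut (C : Cirquent) : Prop := ∀ v, CTrue v C

def Cirquent.ren (τ : ℕ → ℕ) (C : Cirquent) : Cirquent := ⟨C.pool.map (Fml.ren τ), C.groups⟩

theorem GTrue.map_ren {v : ℕ → Bool} {τ : ℕ → ℕ} {P : List Fml} {g : Finset ℕ}
    (h : GTrue (fun n => v (τ n)) P g) : GTrue v (P.map (Fml.ren τ)) g := by
  obtain ⟨i, hi, A, hA, he⟩ := h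
  exact ⟨i, hi, A.ren τ, by simp [hA], by rw [Fml.eval_ren, he]⟩

theorem CTaut.ren {C : Cirquent} (h : CTaut C) (τ : ℕ → ℕ) : CTaut (C.ren τ) :=
  fun _ g hg => (h _ g hg).map_ren

theorem GTrue.image {v : ℕ → Bool} {P Q : List Fml} {g : Finset ℕ} {f : ℕ → ℕ}
    (hf : ∀ i A, P[i]? = some A → A.eval v = true → ∃ B, Q[f i]? = some B ∧ B.eval v = true)
    (h : GTrue v P g) : GTrue v Q (g.image f) := by
  obtain ⟨i, hi, A, hA, he⟩ := h
  obtain ⟨B, hB, he'⟩ := hf i A hA he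
  exact ⟨f i, Finset.mem_image_of_mem f hi, B, hB, he'⟩

theorem CTrue.of_groups_subset {v : ℕ → Bool} {P C : Cirquent} (hpool : C.pool = P.pool)
    (hgroups : ∀ g ∈ C.groups, ∃ g' ∈ P.groups, g' ⊆ g) (h : CTrue v P) : CTrue v C := by
  intro g hg
  obtain ⟨g', hg', hsub⟩ := hgroups g hg
  obtain ⟨i, hi, A, hA, he⟩ := h g' hg'
  exact ⟨i, hsub hi, A, hpool ▸ hA, he⟩

theorem CTrue.of_groups_image {v : ℕ → Bool} {P C : Cirquent} {f : ℕ → ℕ}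
    (hgroups : C.groups = P.groups.map (Finset.image f))
    (hf : ∀ i A, P.pool[i]? = some A → A.eval v = true →
      ∃ B, C.pool[f i]? = some B ∧ B.eval v = true)
    (h : CTrue v P) : CTrue v C := by
  intro g hg
  rw [hgroups, List.mem_map] at hg
  obtain ⟨g', hg', rfl⟩ := hg
  exact (h g' hg').image hf

theorem CTrue.mix {v : ℕ → Bool} {A B C : Cirquent} (h : MixStep A B C)
    (hA : CTrue v A) (hB : CTrue v B) : CTrue v C := by
  obtain ⟨hpool, hgroups⟩ := h
  intro g hg
  rw [hgroups, List.mem_append, List.mem_map] at hg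
  rcases hg with hg | ⟨g', hg', rfl⟩
  · obtain ⟨i, hi, F, hF, he⟩ := hA g hg
    have hlt : i < A.pool.length := (List.getElem?_eq_some_iff.1 hF).1
    exact ⟨i, hi, F, by rw [hpool, List.getElem?_append_left hlt, hF], he⟩
  · refine (hB g' hg').image fun i F hF he => ⟨F, ?_, he⟩
    rw [hpool, List.getElem?_append_right (by omega)]
    simpa using hF

theorem getElem?_append_length_add {α : Type*} (l₁ l : List α) (k : ℕ) :
    (l₁ ++ l)[l₁.length + k]? = l[k]? := by
  rw [List.getElem?_append_right (by omega), Nat.add_sub_cancel_left]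

theorem getElem?_append_length_cons {α : Type*} (l₁ l : List α) (a : α) :
    (l₁ ++ a :: l)[l₁.length]? = some a := by
  simp

theorem mergeIdx_self (n : ℕ) : mergeIdx n n = n := by simp [mergeIdx]

theorem mergeIdx_succ_self (n : ℕ) : mergeIdx n (n + 1) = n := by simp [mergeIdx]

section PoolIndex

variable {α : Type*} {l₁ l₂ : List α}

theorem getElem?_swapIdx (F G : α) (i : ℕ) :
    (l₁ ++ G :: F :: l₂)[swapIdx l₁.length i]? = (l₁ ++ F :: G :: l₂)[i]? := by
  rcases Nat.lt_or_ge i l₁.length with hi | hi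
  · rw [swapIdx, if_neg (by omega), if_neg (by omega), List.getElem?_append_left hi,
      List.getElem?_append_left hi]
  · obtain ⟨k, rfl⟩ := Nat.exists_eq_add_of_le hi
    rcases k with _ | _ | k <;> simp [swapIdx, List.getElem?_append_right]

theorem getElem?_insShift (F : α) (i : ℕ) :
    (l₁ ++ F :: l₂)[insShift l₁.length i]? = (l₁ ++ l₂)[i]? := by
  rcases Nat.lt_or_ge i l₁.length with hi | hi
  · rw [insShift, if_pos hi, List.getElem?_append_left hi, List.getElem?_append_left hi]
  · obtain ⟨k, rfl⟩ := Nat.exists_eq_add_of_le hi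
    rw [insShift, if_neg (by omega), add_assoc, getElem?_append_length_add,
      getElem?_append_length_add, List.getElem?_cons_succ]

theorem getElem?_mergeIdx (F G H : α) {i : ℕ} (hi : i ≠ l₁.length) (hi' : i ≠ l₁.length + 1) :
    (l₁ ++ H :: l₂)[mergeIdx l₁.length i]? = (l₁ ++ F :: G :: l₂)[i]? := by
  rcases Nat.lt_or_ge i l₁.length with hlt | hge
  · rw [mergeIdx, if_pos hlt.le, List.getElem?_append_left hlt, List.getElem?_append_left hlt]
  · obtain ⟨k, rfl⟩ : ∃ k, i = l₁.length + (k + 2) := ⟨i - l₁.length - 2, by omega⟩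
    rw [mergeIdx, if_neg (by omega), show l₁.length + (k + 2) - 1 = l₁.length + (k + 1) by omega,
      getElem?_append_length_add, getElem?_append_length_add]
    rfl

end PoolIndex

section StepSoundness

variable {v : ℕ → Bool} {l₁ l₂ : List Fml}

theorem GTrue.mono {P : List Fml} {g g' : Finset ℕ} (h : GTrue v P g) (hg : g ⊆ g') :
    GTrue v P g' :=
  let ⟨i, hi, A, hA, he⟩ := h
  ⟨i, hg hi, A, hA, he⟩

theorem gTrue_image_mergeIdx {F G A : Fml} (H : Fml) {g : Finset ℕ} {i : ℕ} (hi : i ∈ g)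
    (hin : i ≠ l₁.length) (hin' : i ≠ l₁.length + 1)
    (hA : (l₁ ++ F :: G :: l₂)[i]? = some A) (he : A.eval v = true) :
    GTrue v (l₁ ++ H :: l₂) (g.image (mergeIdx l₁.length)) :=
  ⟨_, Finset.mem_image_of_mem _ hi, A, by rw [getElem?_mergeIdx F G H hin hin', hA], he⟩

theorem CTrue.ofExch {P C : Cirquent} (h : OfExchStep P C) (hP : CTrue v P) : CTrue v C := by
  obtain ⟨l₁, l₂, F, G, hp, hc, hgroups⟩ := h
  exact hP.of_groups_image hgroups fun i A hA he =>
    ⟨A, by rw [hc, getElem?_swapIdx, ← hp, hA], he⟩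

theorem CTrue.poolWeak {P C : Cirquent} (h : PoolWeakStep P C) (hP : CTrue v P) : CTrue v C := by
  obtain ⟨l₁, l₂, F, hp, hc, hgroups⟩ := h
  exact hP.of_groups_image hgroups fun i A hA he =>
    ⟨A, by rw [hc, getElem?_insShift, ← hp, hA], he⟩

theorem CTrue.orIntro {P C : Cirquent} (h : OrIntroStep P C) (hP : CTrue v P) : CTrue v C := by
  obtain ⟨l₁, l₂, F, G, hp, hc, hgroups⟩ := h
  refine hP.of_groups_image hgroups fun i A hA he => ?_
  rw [hp] at hA
  rw [hc]
  by_cases hin : i = l₁.length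
  · subst hin
    rw [getElem?_append_length_cons, Option.some_inj] at hA
    exact ⟨_, by rw [mergeIdx_self, getElem?_append_length_cons], by simp [Fml.eval, hA, he]⟩
  by_cases hin' : i = l₁.length + 1
  · subst hin'
    rw [getElem?_append_length_add, List.getElem?_cons_succ, List.getElem?_cons_zero,
      Option.some_inj] at hA
    exact ⟨_, by rw [mergeIdx_succ_self, getElem?_append_length_cons], by simp [Fml.eval, hA, he]⟩
  exact ⟨A, by rw [getElem?_mergeIdx F G _ hin hin', hA], he⟩

theorem AndMerge.gTrue {F G : Fml} {gs ms : List (Finset ℕ)} (hm : AndMerge l₁.length gs ms)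
    (hgs : ∀ g ∈ gs, GTrue v (l₁ ++ F :: G :: l₂) g) :
    ∀ g ∈ ms, GTrue v (l₁ ++ F.and G :: l₂) (g.image (mergeIdx l₁.length)) := by
  induction hm with
  | nil => simp
  | @skip Γ l l' hn hn' _ ih =>
    simp only [List.mem_cons, forall_eq_or_imp] at hgs ⊢
    obtain ⟨i, hi, A, hA, he⟩ := hgs.1
    exact ⟨gTrue_image_mergeIdx _ hi (ne_of_mem_of_not_mem hi hn)
      (ne_of_mem_of_not_mem hi hn') hA he, ih hgs.2⟩
  | @merge Γ Δ l l' _ hΓ' _ hΔ _ ih =>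
    simp only [List.mem_cons, forall_eq_or_imp] at hgs ⊢
    refine ⟨?_, ih hgs.2.2⟩
    obtain ⟨i, hi, A, hA, he⟩ := hgs.1
    obtain ⟨j, hj, B, hB, he'⟩ := hgs.2.1
    have hin' := ne_of_mem_of_not_mem hi hΓ'
    have hjn := ne_of_mem_of_not_mem hj hΔ
    by_cases hin : i = l₁.length
    · by_cases hjn' : j = l₁.length + 1
      · subst hin hjn'
        rw [getElem?_append_length_cons, Option.some_inj] at hA
        rw [getElem?_append_length_add, List.getElem?_cons_succ, List.getElem?_cons_zero,
          Option.some_inj] at hB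
        refine ⟨_, Finset.mem_image_of_mem _ (Finset.mem_union_left _ hi), F.and G, ?_, ?_⟩
        · rw [mergeIdx_self, getElem?_append_length_cons]
        · simp [Fml.eval, hA, hB, he, he']
      · exact (gTrue_image_mergeIdx _ hj hjn hjn' hB he').mono
          (Finset.image_subset_image Finset.subset_union_right)
    · exact (gTrue_image_mergeIdx _ hi hin hin' hA he).mono
        (Finset.image_subset_image Finset.subset_union_left)

theorem CTrue.andIntro {P C : Cirquent} (h : AndIntroStep P C) (hP : CTrue v P) :
    CTrue v C := by
  obtain ⟨l₁, l₂, F, G, merged, hp, hc, hm, hgroups⟩ := h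
  intro g hg
  rw [hgroups, List.mem_map] at hg
  obtain ⟨g', hg', rfl⟩ := hg
  exact hc ▸ hm.gTrue (fun g hg => hp ▸ hP g hg) g' hg'

theorem CTrue.of_unRel {r : RuleName} {P C : Cirquent} (h : unRel r P C) (hP : CTrue v P) :
    CTrue v C := by
  cases r with
  | ofExch => exact hP.ofExch h
  | poolWeak => exact hP.poolWeak h
  | orIntro => exact hP.orIntro h
  | andIntro => exact hP.andIntro h
  | ogExch =>
    obtain ⟨hpool, g₁, g₂, Γ, Δ, hp, hc⟩ := h
    refine hP.of_groups_subset hpool fun g hg => ⟨g, ?_, subset_rfl⟩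
    simp only [hp, hc, List.mem_append, List.mem_cons] at hg ⊢
    tauto
  | ogWeak =>
    obtain ⟨hpool, g₁, g₂, Γ, j, -, -, hp, hc⟩ := h
    refine hP.of_groups_subset hpool fun g hg => ?_
    simp only [hc, List.mem_append, List.mem_cons] at hg
    rcases hg with hg | rfl | hg
    · exact ⟨g, by simp [hp, hg], subset_rfl⟩
    · exact ⟨Γ, by simp [hp], Finset.subset_insert j Γ⟩
    · exact ⟨g, by simp [hp, hg], subset_rfl⟩
  | dupDown =>
    obtain ⟨hpool, g₁, g₂, Γ, hp, hc⟩ := h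
    refine hP.of_groups_subset hpool fun g hg => ⟨g, ?_, subset_rfl⟩
    simp only [hp, hc, List.mem_append, List.mem_cons] at hg ⊢
    tauto
  | dupUp =>
    obtain ⟨hpool, g₁, g₂, Γ, hp, hc⟩ := h
    refine hP.of_groups_subset hpool fun g hg => ⟨g, ?_, subset_rfl⟩
    simp only [hp, hc, List.mem_append, List.mem_cons] at hg ⊢
    tauto
  | emptyAx | idAx | mix => exact h.elim

end StepSoundness

theorem _root_.List.exists_of_map_eq_append_cons_cons {α β : Type*} {f : α → β} {L : List α}
    {l₁ l₂ : List β} {x y : β} (h : L.map f = l₁ ++ x :: y :: l₂) :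
    ∃ m₁ a b m₂, L = m₁ ++ a :: b :: m₂ ∧ m₁.map f = l₁ ∧ f a = x ∧ f b = y ∧ m₂.map f = l₂ := by
  obtain ⟨m₁, _, rfl, rfl, a, _, rfl, rfl, b, m₂, rfl, rfl, rfl⟩ :=
    by simpa only [List.map_eq_append_iff, List.map_eq_cons_iff] using h
  exact ⟨m₁, a, b, m₂, rfl, rfl, rfl, rfl, rfl⟩

@[simp] theorem Cirquent.ren_pool (τ : ℕ → ℕ) (C : Cirquent) :
    (C.ren τ).pool = C.pool.map (Fml.ren τ) := rfl

@[simp] theorem Cirquent.ren_groups (τ : ℕ → ℕ) (C : Cirquent) : (C.ren τ).groups = C.groups :=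
  rfl

theorem Cirquent.ren_eq_iff {τ : ℕ → ℕ} {D C : Cirquent} :
    D.ren τ = C ↔ D.pool.map (Fml.ren τ) = C.pool ∧ D.groups = C.groups := by
  cases D; cases C; simp [Cirquent.ren]

-- Apart from pool weakening, no rule creates an atom occurrence, so normality of the pool survives.
theorem exists_unRel_ren_eq {r : RuleName} (hr : r ≠ .poolWeak) {τ : ℕ → ℕ} {D C : Cirquent}
    (h : unRel r (D.ren τ) C) :
    ∃ D', unRel r D D' ∧ D'.ren τ = C ∧ (PoolNormal D.pool → PoolNormal D'.pool) := by
  cases r with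
  | ofExch =>
    obtain ⟨l₁, l₂, F, G, hp, hc, hgroups⟩ := h
    obtain ⟨m₁, F', G', m₂, hD, rfl, rfl, rfl, rfl⟩ := List.exists_of_map_eq_append_cons_cons hp
    refine ⟨⟨m₁ ++ G' :: F' :: m₂, D.groups.map (Finset.image (swapIdx m₁.length))⟩,
      ⟨m₁, m₂, F', G', hD, rfl, rfl⟩, Cirquent.ren_eq_iff.2 ⟨by simp [hc], by simp [hgroups]⟩,
      fun hN a => ?_⟩
    have := hN a
    simp only [hD, List.map_append, List.map_cons, List.sum_append, List.sum_cons] at this ⊢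
    omega
  | orIntro =>
    obtain ⟨l₁, l₂, F, G, hp, hc, hgroups⟩ := h
    obtain ⟨m₁, F', G', m₂, hD, rfl, rfl, rfl, rfl⟩ := List.exists_of_map_eq_append_cons_cons hp
    refine ⟨⟨m₁ ++ F'.or G' :: m₂, D.groups.map (Finset.image (mergeIdx m₁.length))⟩,
      ⟨m₁, m₂, F', G', hD, rfl, rfl⟩,
      Cirquent.ren_eq_iff.2 ⟨by simp [hc, Fml.ren], by simp [hgroups]⟩, fun hN a => ?_⟩
    have := hN a
    simp only [hD, List.map_append, List.map_cons, List.sum_append, List.sum_cons, Fml.cPos,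
      Fml.cNeg] at this ⊢
    omega
  | andIntro =>
    obtain ⟨l₁, l₂, F, G, merged, hp, hc, hm, hgroups⟩ := h
    obtain ⟨m₁, F', G', m₂, hD, rfl, rfl, rfl, rfl⟩ := List.exists_of_map_eq_append_cons_cons hp
    refine ⟨⟨m₁ ++ F'.and G' :: m₂, merged.map (Finset.image (mergeIdx m₁.length))⟩,
      ⟨m₁, m₂, F', G', merged, hD, rfl, by simpa using hm, rfl⟩,
      Cirquent.ren_eq_iff.2 ⟨by simp [hc, Fml.ren], by simp [hgroups]⟩, fun hN a => ?_⟩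
    have := hN a
    simp only [hD, List.map_append, List.map_cons, List.sum_append, List.sum_cons, Fml.cPos,
      Fml.cNeg] at this ⊢
    omega
  | ogExch =>
    obtain ⟨hpool, g₁, g₂, Γ, Δ, hp, hc⟩ := h
    exact ⟨⟨D.pool, C.groups⟩, ⟨rfl, g₁, g₂, Γ, Δ, hp, hc⟩,
      Cirquent.ren_eq_iff.2 ⟨hpool.symm, rfl⟩, id⟩
  | ogWeak =>
    obtain ⟨hpool, g₁, g₂, Γ, j, hj, hjΓ, hp, hc⟩ := h
    exact ⟨⟨D.pool, C.groups⟩, ⟨rfl, g₁, g₂, Γ, j, by simpa using hj, hjΓ, hp, hc⟩,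
      Cirquent.ren_eq_iff.2 ⟨hpool.symm, rfl⟩, id⟩
  | dupDown =>
    obtain ⟨hpool, g₁, g₂, Γ, hp, hc⟩ := h
    exact ⟨⟨D.pool, C.groups⟩, ⟨rfl, g₁, g₂, Γ, hp, hc⟩,
      Cirquent.ren_eq_iff.2 ⟨hpool.symm, rfl⟩, id⟩
  | dupUp =>
    obtain ⟨hpool, g₁, g₂, Γ, hp, hc⟩ := h
    exact ⟨⟨D.pool, C.groups⟩, ⟨rfl, g₁, g₂, Γ, hp, hc⟩,
      Cirquent.ren_eq_iff.2 ⟨hpool.symm, rfl⟩, id⟩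
  | poolWeak => exact absurd rfl hr
  | emptyAx | idAx | mix => exact h.elim

def IsNormalTautInstance (C : Cirquent) : Prop :=
  ∃ (D : Cirquent) (τ : ℕ → ℕ), D.ren τ = C ∧ PoolNormal D.pool ∧ CTaut D

namespace IsNormalTautInstance

theorem emptyCirquent : IsNormalTautInstance emptyCirquent :=
  ⟨CirquentCalc.emptyCirquent, id, rfl, fun _ => by simp [CirquentCalc.emptyCirquent],
    fun _ g hg => by simp [CirquentCalc.emptyCirquent] at hg⟩

theorem idCirquent (F : Fml) : IsNormalTautInstance (idCirquent F) := by
  obtain ⟨L, σ, hL, rfl⟩ := F.exists_linear_ren_eq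
  refine ⟨CirquentCalc.idCirquent L, σ, by simp [Cirquent.ren, CirquentCalc.idCirquent,
    Fml.ren_negate], hL.poolNormal_negate, fun v g hg => ?_⟩
  simp only [CirquentCalc.idCirquent, List.mem_singleton] at hg ⊢
  subst hg
  cases hv : L.eval v
  · exact ⟨0, by simp, L.negate, rfl, by simp [Fml.eval_negate, hv]⟩
  · exact ⟨1, by simp, L, rfl, hv⟩

theorem mix {A B C : Cirquent} (hA : IsNormalTautInstance A) (hB : IsNormalTautInstance B)
    (h : MixStep A B C) : IsNormalTautInstance C := by
  obtain ⟨DA, τA, rfl, hNA, hTA⟩ := hA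
  obtain ⟨DB, τB, rfl, hNB, hTB⟩ := hB
  obtain ⟨hpool, hgroups⟩ := h
  refine ⟨⟨DA.pool.map (Fml.ren (2 * ·)) ++ DB.pool.map (Fml.ren (2 * · + 1)), C.groups⟩,
    interleave τA τB, Cirquent.ren_eq_iff.2 ⟨?_, rfl⟩, hNA.append_even_odd hNB,
    fun v => (hTA.ren (2 * ·) v).mix ⟨rfl, by simp [hgroups]⟩ (hTB.ren (2 * · + 1) v)⟩
  simp [hpool, Fml.ren_comp_ren]

theorem poolWeak {P C : Cirquent} (hP : IsNormalTautInstance P) (h : PoolWeakStep P C) :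
    IsNormalTautInstance C := by
  obtain ⟨D, τ, rfl, hN, hT⟩ := hP
  obtain ⟨l₁, l₂, F, hp, hc, hgroups⟩ := h
  obtain ⟨m₁, m₂, hD, rfl, rfl⟩ := List.map_eq_append_iff.1 hp
  obtain ⟨L, σ, hL, rfl⟩ := F.exists_linear_ren_eq
  refine ⟨⟨m₁.map (Fml.ren (2 * ·)) ++ L.ren (2 * · + 1) :: m₂.map (Fml.ren (2 * ·)),
      D.groups.map (Finset.image (insShift m₁.length))⟩, interleave τ σ,
    Cirquent.ren_eq_iff.2 ⟨by simp [hc, Fml.ren_ren, Fml.ren_comp_ren], by simp [hgroups]⟩,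
    (hN.append_even_odd hL.poolNormal_singleton).perm ?_,
    fun v => (hT.ren (2 * ·) v).poolWeak ⟨_, _, L.ren (2 * · + 1), by simp [hD], rfl, by simp⟩⟩
  simpa [hD] using (List.perm_append_singleton _ _).trans List.perm_middle.symm

theorem of_unRel {r : RuleName} (hr : r ≠ .poolWeak) {P C : Cirquent}
    (hP : IsNormalTautInstance P) (h : unRel r P C) : IsNormalTautInstance C := by
  obtain ⟨D, τ, rfl, hN, hT⟩ := hP
  obtain ⟨D', hD', hren, hN'⟩ := exists_unRel_ren_eq hr h
  exact ⟨D', τ, hren, hN' hN, fun v => (hT v).of_unRel hD'⟩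

theorem exists_of_fmlCirquent {F : Fml} (h : IsNormalTautInstance (fmlCirquent F)) :
    ∃ (B : Fml) (τ : ℕ → ℕ), Normal B ∧ Tautology B ∧ B.ren τ = F := by
  obtain ⟨D, τ, hren, hN, hT⟩ := h
  obtain ⟨hpool, hgroups⟩ := Cirquent.ren_eq_iff.1 hren
  obtain ⟨B, hD, rfl⟩ : ∃ B, D.pool = [B] ∧ B.ren τ = F := by
    simpa [fmlCirquent, List.map_eq_singleton_iff] using hpool
  refine ⟨B, τ, (hD ▸ hN).normal, fun v => ?_, rfl⟩
  obtain ⟨i, hi, A, hA, he⟩ := hT v {0} (by simp [hgroups, fmlCirquent])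
  rw [Finset.mem_singleton] at hi
  simp_all

end IsNormalTautInstance

theorem PTree.Valid.isNormalTautInstance : ∀ {p : PTree}, p.Valid → IsNormalTautInstance p.concl
  | .leaf _ _, .inl ⟨_, rfl⟩ => .emptyCirquent
  | .leaf _ _, .inr ⟨_, F, rfl⟩ => .idCirquent F
  | .un _ r _, ⟨hp, hstep⟩ => by
    by_cases hr : r = .poolWeak
    · subst hr
      exact hp.isNormalTautInstance.poolWeak hstep
    · exact hp.isNormalTautInstance.of_unRel hr hstep
  | .bin _ _ _ _, ⟨hp, hq, _, hmix⟩ => hp.isNormalTautInstance.mix hq.isNormalTautInstance hmix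

theorem atomicInstanceOf_ren (B : Fml) (τ : ℕ → ℕ) : AtomicInstanceOf (B.ren τ) B :=
  ⟨fun n => .pos (τ n), fun n => ⟨τ n, rfl⟩, Fml.subst_pos_eq_ren τ B⟩

end CirquentCalc

open CirquentCalc

/-- Every formula provable in CL5⁻ is an atomic-level instance of a
normal binary tautology. -/
theorem cl5m_normal_binary_instance (F : Fml) (h : ProvesCL5m F) :
    ∃ B : Fml, Binary B ∧ Normal B ∧ Tautology B ∧ AtomicInstanceOf F B := by
  obtain ⟨p, hp, -, hconcl⟩ := h
  obtain ⟨B, τ, hN, hT, rfl⟩ := (hconcl ▸ hp.isNormalTautInstance).exists_of_fmlCirquent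
  exact ⟨B, hN.binary, hN, hT, atomicInstanceOf_ren B τ⟩
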